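/- Let N ≥ 2 and k ≥ 1. For each s ∈ ℕ let m_1(s), …, m_N(s) and μ_1(s), …, μ_k(s) be positive masses and let (q_1(s), …, q_N(s), p_1(s), …, p_k(s)) be a normalized central configuration of the N + k bodies with these masses. Assume that as s → ∞: m_i(s) → m̄_i > 0 for i = 1, …, N; μ_j(s) → 0 for j = 1, …, k; q_i(s) → q̄_i for i = 1, …, N; and p_j(s) → p̄_j for j = 1, …, k. Then for every j = 1, …, k: p̄_j ≠ q̄_i for all i = 1, …, N, and p̄_j is a relative normalized central configuration of the restricted (N+1)-body problem for the limit configuration, i.e. p̄_j = Σ_{i=1}^{N} (m̄_i / |p̄_j − q̄_i|³)(p̄_j − q̄_i). -/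

import Mathlib

open Finset Filter Topology

abbrev E2 : Type := EuclideanSpace ℝ (Fin 2)

/-- The equations for a normalized central configuration:
`q_i = Σ_{j≠i} (m_j / |q_i − q_j|³)(q_i − q_j)` for every `i`. -/
def CCeqs {ι : Type} [Fintype ι] [DecidableEq ι] (m : ι → ℝ) (q : ι → E2) : Prop :=
  ∀ i, q i = ∑ j ∈ Finset.univ.filter (· ≠ i), (m j / ‖q i - q j‖ ^ 3) • (q i - q j)

/-!
Fix a limit point `c` and let `S` be the cluster of bodies converging to `c`. By the central
configuration equations, the force exerted on each member of `S` by the other members tends to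
`c - Σ_{b ∉ S} (m̄_b / |c - x̄_b|³)(c - x̄_b)`, the same limit for all members. Weighted by the
masses these internal forces sum to zero (Newton's third law), so the common limit is zero: this is
the limiting equation, valid for every body.

If a body `i` with `m̄_i > 0` shared its cluster with another body, pair the cluster forces on the
other members `b` with `x_b - x_i`: their mutual attractions contribute a nonnegative amount, the
attraction of `i` contributes `Σ_b m_b m_i / r_b`, and a bound `C` on the cluster forces gives
`Σ_b m_b m_i / r_b ≤ C Σ_b m_b r_b`. Hence `m_i ≤ C r_b²` for some `b`, and `r_b → 0` forces
`m̄_i ≤ 0`.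
-/

open scoped RealInnerProductSpace

section Configuration

variable {ι E : Type*} [NormedAddCommGroup E] [InnerProductSpace ℝ E]

/-- The term of body `b` in the central configuration equation at the point `z`. It vanishes
at `z = x b`, so sums of these terms may run over all bodies. -/
noncomputable def ccTerm (M : ι → ℝ) (x : ι → E) (z : E) (b : ι) : E :=
  (M b / ‖z - x b‖ ^ 3) • (z - x b)

@[simp]
lemma ccTerm_self (M : ι → ℝ) (x : ι → E) (b : ι) : ccTerm M x (x b) b = 0 := by
  simp [ccTerm]

lemma inner_ccTerm (M : ι → ℝ) (x : ι → E) (z : E) (b : ι) :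
    ⟪ccTerm M x z b, z - x b⟫ = M b / ‖z - x b‖ := by
  rw [ccTerm, real_inner_smul_left, real_inner_self_eq_norm_sq]
  rcases eq_or_ne ‖z - x b‖ 0 with h | h
  · simp [h]
  · field_simp

lemma smul_ccTerm_antisymm (M : ι → ℝ) (x : ι → E) (a b : ι) :
    M a • ccTerm M x (x a) b = -(M b • ccTerm M x (x b) a) := by
  rw [ccTerm, ccTerm, smul_smul, smul_smul, norm_sub_rev (x b), ← neg_sub (x a), smul_neg, neg_neg,
    mul_div_left_comm]

lemma sum_sum_eq_zero_of_antisymm {M : Type*} [AddCommGroup M] [IsAddTorsionFree M]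
    (S : Finset ι) (G : ι → ι → M) (hG : ∀ a b, G a b = -G b a) :
    ∑ a ∈ S, ∑ b ∈ S, G a b = 0 := by
  refine self_eq_neg.mp ?_
  conv_lhs => rw [Finset.sum_comm]
  rw [← Finset.sum_neg_distrib]
  refine Finset.sum_congr rfl fun a _ => ?_
  rw [← Finset.sum_neg_distrib]
  exact Finset.sum_congr rfl fun b _ => hG b a

lemma sum_sum_inner_sub_nonneg_of_antisymm (S : Finset ι) (G : ι → ι → E)
    (hG : ∀ a b, G a b = -G b a) (y : ι → E) (z : E) (hpos : ∀ a b, 0 ≤ ⟪G a b, y a - y b⟫) :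
    0 ≤ ∑ a ∈ S, ∑ b ∈ S, ⟪G a b, y a - z⟫ := by
  have hswap : ∑ a ∈ S, ∑ b ∈ S, ⟪G a b, y b - z⟫ = -∑ a ∈ S, ∑ b ∈ S, ⟪G a b, y a - z⟫ := by
    rw [Finset.sum_comm, ← Finset.sum_neg_distrib]
    refine Finset.sum_congr rfl fun a _ => ?_
    rw [← Finset.sum_neg_distrib]
    exact Finset.sum_congr rfl fun b _ => by rw [hG b a, inner_neg_left]
  have hdiff : ∑ a ∈ S, ∑ b ∈ S, ⟪G a b, y a - z⟫ - ∑ a ∈ S, ∑ b ∈ S, ⟪G a b, y b - z⟫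
      = ∑ a ∈ S, ∑ b ∈ S, ⟪G a b, y a - y b⟫ := by
    simp only [← Finset.sum_sub_distrib, ← inner_sub_right, sub_sub_sub_cancel_right]
  have := Finset.sum_nonneg fun a (_ : a ∈ S) => Finset.sum_nonneg fun b (_ : b ∈ S) => hpos a b
  linarith

lemma sum_sum_inner_smul_ccTerm_nonneg {M : ι → ℝ} (hM : ∀ a, 0 ≤ M a) (x : ι → E) (S : Finset ι)
    (z : E) : 0 ≤ ∑ a ∈ S, ∑ b ∈ S, ⟪M a • ccTerm M x (x a) b, x a - z⟫ :=
  sum_sum_inner_sub_nonneg_of_antisymm S _ (smul_ccTerm_antisymm M x) x z fun a b => by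
    rw [real_inner_smul_left, inner_ccTerm]
    exact mul_nonneg (hM a) (div_nonneg (hM b) (norm_nonneg _))

lemma mass_le_mul_sum_sq_of_norm_sum_ccTerm_le {M : ι → ℝ} (hM : ∀ a, 0 < M a) {x : ι → E}
    (hx : Function.Injective x) {S : Finset ι} {i a : ι} (hi : i ∈ S) (ha : a ∈ S) (hai : a ≠ i)
    {C : ℝ} (hC : ∀ b ∈ S, ‖∑ b' ∈ S, ccTerm M x (x b) b'‖ ≤ C) :
    M i ≤ C * ∑ b ∈ S, ‖x b - x i‖ ^ 2 := by
  classical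
  set t := S.erase i
  have hat : a ∈ t := Finset.mem_erase.mpr ⟨hai, ha⟩
  have hr : ∀ b ∈ t, 0 < ‖x b - x i‖ := fun b hb =>
    norm_pos_iff.mpr (sub_ne_zero.mpr (hx.ne (Finset.ne_of_mem_erase hb)))
  have hsplit : ∀ b ∈ t, M b * ⟪∑ b' ∈ S, ccTerm M x (x b) b', x b - x i⟫
      = M b * (M i / ‖x b - x i‖) + ∑ b' ∈ t, ⟪M b • ccTerm M x (x b) b', x b - x i⟫ := by
    intro b _
    rw [← Finset.add_sum_erase S _ hi, inner_add_left, inner_ccTerm, sum_inner, mul_add,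
      Finset.mul_sum]
    simp only [real_inner_smul_left]
    rfl
  have hlower : ∑ b ∈ t, M b * (M i / ‖x b - x i‖)
      ≤ ∑ b ∈ t, M b * ⟪∑ b' ∈ S, ccTerm M x (x b) b', x b - x i⟫ := by
    rw [Finset.sum_congr rfl hsplit, Finset.sum_add_distrib, le_add_iff_nonneg_right]
    exact sum_sum_inner_smul_ccTerm_nonneg (fun a => (hM a).le) x t (x i)
  have hupper : ∑ b ∈ t, M b * ⟪∑ b' ∈ S, ccTerm M x (x b) b', x b - x i⟫
      ≤ ∑ b ∈ t, M b * (C * ‖x b - x i‖) :=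
    Finset.sum_le_sum fun b hb => mul_le_mul_of_nonneg_left
      ((real_inner_le_norm _ _).trans (mul_le_mul_of_nonneg_right
        (hC b (Finset.mem_of_mem_erase hb)) (norm_nonneg _))) (hM b).le
  obtain ⟨b, hb, hle⟩ := Finset.exists_le_of_sum_le ⟨a, hat⟩ (hlower.trans hupper)
  have hC0 : 0 ≤ C := (norm_nonneg _).trans (hC a ha)
  calc M i ≤ C * ‖x b - x i‖ ^ 2 := by
        rw [mul_le_mul_iff_right₀ (hM b), div_le_iff₀ (hr b hb)] at hle
        linarith
    _ ≤ C * ∑ b ∈ S, ‖x b - x i‖ ^ 2 := mul_le_mul_of_nonneg_left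
        (Finset.single_le_sum (f := fun b => ‖x b - x i‖ ^ 2) (fun _ _ => sq_nonneg _)
          (Finset.mem_of_mem_erase hb)) hC0

end Configuration

section Limits

variable {α ι E : Type*} [NormedAddCommGroup E] [InnerProductSpace ℝ E] {l : Filter α}

lemma eq_zero_of_sum_smul_eq_zero_of_tendsto [l.NeBot] {S : Finset ι} (hS : S.Nonempty)
    {w : α → ι → ℝ} (hw : ∀ t a, 0 < w t a) {F : α → ι → E} (hsum : ∀ t, ∑ a ∈ S, w t a • F t a = 0)
    {L : E} (hF : ∀ a ∈ S, Tendsto (F · a) l (𝓝 L)) : L = 0 := by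
  have hbound : ∀ t, ‖L‖ ≤ ∑ a ∈ S, ‖L - F t a‖ := by
    intro t
    have hW : 0 < ∑ a ∈ S, w t a := Finset.sum_pos (fun a _ => hw t a) hS
    have hWL : (∑ a ∈ S, w t a) • L = ∑ a ∈ S, w t a • (L - F t a) := by
      simp only [smul_sub, Finset.sum_sub_distrib, hsum, sub_zero, Finset.sum_smul]
    refine le_of_mul_le_mul_left ?_ hW
    calc (∑ a ∈ S, w t a) * ‖L‖ = ‖∑ a ∈ S, w t a • (L - F t a)‖ := by
          rw [← hWL, norm_smul, Real.norm_of_nonneg hW.le]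
      _ ≤ ∑ a ∈ S, w t a * ‖L - F t a‖ := by
          refine (norm_sum_le _ _).trans_eq (Finset.sum_congr rfl fun a _ => ?_)
          rw [norm_smul, Real.norm_of_nonneg (hw t a).le]
      _ ≤ ∑ a ∈ S, (∑ b ∈ S, w t b) * ‖L - F t a‖ :=
          Finset.sum_le_sum fun a ha => mul_le_mul_of_nonneg_right
            (Finset.single_le_sum (fun b _ => (hw t b).le) ha) (norm_nonneg _)
      _ = (∑ a ∈ S, w t a) * ∑ a ∈ S, ‖L - F t a‖ := (Finset.mul_sum _ _ _).symm
  have hlim : Tendsto (fun t => ∑ a ∈ S, ‖L - F t a‖) l (𝓝 0) := by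
    simpa using tendsto_finsetSum S fun a ha => ((hF a ha).const_sub L).norm
  exact norm_le_zero_iff.mp (ge_of_tendsto' hlim hbound)

lemma Filter.Tendsto.ccTerm {M : α → ι → ℝ} {x : α → ι → E} {z : α → E} {M₀ : ι → ℝ}
    {x₀ : ι → E} {z₀ : E} {b : ι} (hM : Tendsto (M · b) l (𝓝 (M₀ b)))
    (hx : Tendsto (x · b) l (𝓝 (x₀ b))) (hz : Tendsto z l (𝓝 z₀)) (hne : z₀ ≠ x₀ b) :
    Tendsto (fun t => ccTerm (M t) (x t) (z t) b) l (𝓝 (ccTerm M₀ x₀ z₀ b)) := by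
  have hsub := hz.sub hx
  exact (hM.div (hsub.norm.pow 3) (pow_ne_zero 3 (norm_ne_zero_iff.mpr (sub_ne_zero.mpr hne)))).smul
    hsub

variable [Fintype ι] {M : α → ι → ℝ} {x : α → ι → E} {M₀ : ι → ℝ} {x₀ : ι → E}

lemma tendsto_sum_ccTerm_of_forall_notMem_ne [DecidableEq ι]
    (hcc : ∀ t a, x t a = ∑ b, ccTerm (M t) (x t) (x t a) b)
    (hM : ∀ b, Tendsto (M · b) l (𝓝 (M₀ b))) (hx : ∀ b, Tendsto (x · b) l (𝓝 (x₀ b)))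
    {S : Finset ι} {c : E} (hS : ∀ b ∉ S, x₀ b ≠ c) {a : ι} (ha : x₀ a = c) :
    Tendsto (fun t => ∑ b ∈ S, ccTerm (M t) (x t) (x t a) b) l
      (𝓝 (c - ∑ b ∈ Sᶜ, ccTerm M₀ x₀ c b)) := by
  have hsplit : ∀ t, ∑ b ∈ S, ccTerm (M t) (x t) (x t a) b
      = x t a - ∑ b ∈ Sᶜ, ccTerm (M t) (x t) (x t a) b := fun t =>
    eq_sub_of_add_eq ((Finset.sum_add_sum_compl S _).trans (hcc t a).symm)
  subst ha
  refine Tendsto.congr (fun t => (hsplit t).symm) ((hx a).sub (tendsto_finsetSum _ fun b hb => ?_))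
  exact (hM b).ccTerm (hx b) (hx a) (hS b (Finset.mem_compl.mp hb)).symm

lemma lim_mass_nonpos_of_lim_eq [l.NeBot] (hpos : ∀ t b, 0 < M t b)
    (hinj : ∀ t, Function.Injective (x t))
    (hcc : ∀ t a, x t a = ∑ b, ccTerm (M t) (x t) (x t a) b)
    (hM : ∀ b, Tendsto (M · b) l (𝓝 (M₀ b))) (hx : ∀ b, Tendsto (x · b) l (𝓝 (x₀ b)))
    {i a : ι} (hai : a ≠ i) (heq : x₀ a = x₀ i) : M₀ i ≤ 0 := by
  classical
  set S := univ.filter (x₀ · = x₀ i)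
  have hmem : ∀ b, b ∈ S ↔ x₀ b = x₀ i := by simp [S]
  have hS : ∀ b ∉ S, x₀ b ≠ x₀ i := fun b hb => mt (hmem b).mpr hb
  set L := x₀ i - ∑ b ∈ Sᶜ, ccTerm M₀ x₀ (x₀ i) b
  have hbound : ∀ᶠ t in l, ∀ b ∈ S, ‖∑ b' ∈ S, ccTerm (M t) (x t) (x t b) b'‖ ≤ ‖L‖ + 1 :=
    (eventually_all_finset S).mpr fun b hb =>
      ((tendsto_sum_ccTerm_of_forall_notMem_ne hcc hM hx hS ((hmem b).mp hb)).norm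
        |>.eventually_lt_const (lt_add_one _)).mono fun _ h => h.le
  have hmass : ∀ᶠ t in l, M t i ≤ (‖L‖ + 1) * ∑ b ∈ S, ‖x t b - x t i‖ ^ 2 :=
    hbound.mono fun t ht => mass_le_mul_sum_sq_of_norm_sum_ccTerm_le (hpos t) (hinj t)
      ((hmem i).mpr rfl) ((hmem a).mpr heq) hai ht
  have hdist : Tendsto (fun t => (‖L‖ + 1) * ∑ b ∈ S, ‖x t b - x t i‖ ^ 2) l (𝓝 0) := by
    have := (tendsto_finsetSum S fun b _ => ((hx b).sub (hx i)).norm.pow 2).const_mul (‖L‖ + 1)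
    rwa [Finset.sum_eq_zero fun b hb => by rw [(hmem b).mp hb, sub_self, norm_zero, sq, mul_zero],
      mul_zero] at this
  exact le_of_tendsto_of_tendsto (hM i) hdist hmass

lemma lim_eq_sum_ccTerm [l.NeBot] (hpos : ∀ t b, 0 < M t b)
    (hcc : ∀ t a, x t a = ∑ b, ccTerm (M t) (x t) (x t a) b)
    (hM : ∀ b, Tendsto (M · b) l (𝓝 (M₀ b))) (hx : ∀ b, Tendsto (x · b) l (𝓝 (x₀ b))) (a : ι) :
    x₀ a = ∑ b, ccTerm M₀ x₀ (x₀ a) b := by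
  classical
  set S := univ.filter (x₀ · = x₀ a)
  have hmem : ∀ b, b ∈ S ↔ x₀ b = x₀ a := by simp [S]
  have hS : ∀ b ∉ S, x₀ b ≠ x₀ a := fun b hb => mt (hmem b).mpr hb
  have hthird : ∀ t, ∑ b ∈ S, M t b • ∑ b' ∈ S, ccTerm (M t) (x t) (x t b) b' = 0 := fun t => by
    have := IsAddTorsionFree.of_isTorsionFree ℝ E
    simp_rw [Finset.smul_sum]
    exact sum_sum_eq_zero_of_antisymm S _ (smul_ccTerm_antisymm (M t) (x t))
  have hL := eq_zero_of_sum_smul_eq_zero_of_tendsto ⟨a, (hmem a).mpr rfl⟩ hpos hthird fun b hb =>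
    tendsto_sum_ccTerm_of_forall_notMem_ne hcc hM hx hS ((hmem b).mp hb)
  refine (sub_eq_zero.mp hL).trans (Finset.sum_subset (Finset.subset_univ _) fun b _ hb => ?_)
  rw [← (hmem b).mp (Finset.notMem_compl.mp hb), ccTerm_self]

end Limits

lemma CCeqs.eq_sum_ccTerm {ι : Type} [Fintype ι] [DecidableEq ι] {m : ι → ℝ} {q : ι → E2}
    (h : CCeqs m q) (i : ι) : q i = ∑ j, ccTerm m q (q i) j :=
  (h i).trans <| Finset.sum_filter_of_ne fun j _ hj => by
    rintro rfl
    exact hj (ccTerm_self m q j)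

theorem stmt8 (N k : ℕ)
    (m : ℕ → Fin N → ℝ) (μ : ℕ → Fin k → ℝ)
    (q : ℕ → Fin N → E2) (p : ℕ → Fin k → E2)
    (hm : ∀ s i, 0 < m s i) (hμ : ∀ s j, 0 < μ s j)
    (hinj : ∀ s, Function.Injective (Sum.elim (q s) (p s)))
    (hcc : ∀ s, CCeqs (Sum.elim (m s) (μ s)) (Sum.elim (q s) (p s)))
    (mbar : Fin N → ℝ) (hmbar : ∀ i, 0 < mbar i)
    (qbar : Fin N → E2) (pbar : Fin k → E2)
    (hmlim : ∀ i, Tendsto (fun s => m s i) atTop (𝓝 (mbar i)))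
    (hμlim : ∀ j, Tendsto (fun s => μ s j) atTop (𝓝 (0 : ℝ)))
    (hqlim : ∀ i, Tendsto (fun s => q s i) atTop (𝓝 (qbar i)))
    (hplim : ∀ j, Tendsto (fun s => p s j) atTop (𝓝 (pbar j))) :
    ∀ j, (∀ i, pbar j ≠ qbar i) ∧
      pbar j = ∑ i, (mbar i / ‖pbar j - qbar i‖ ^ 3) • (pbar j - qbar i) := by
  have hpos : ∀ s b, 0 < Sum.elim (m s) (μ s) b := fun s => Sum.forall.mpr ⟨hm s, hμ s⟩
  have hcc' := fun s => (hcc s).eq_sum_ccTerm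
  have hM : ∀ b, Tendsto (fun s => Sum.elim (m s) (μ s) b) atTop (𝓝 (Sum.elim mbar 0 b)) :=
    Sum.forall.mpr ⟨hmlim, hμlim⟩
  have hx : ∀ b, Tendsto (fun s => Sum.elim (q s) (p s) b) atTop (𝓝 (Sum.elim qbar pbar b)) :=
    Sum.forall.mpr ⟨hqlim, hplim⟩
  intro j
  refine ⟨fun i heq => (hmbar i).not_ge ?_, ?_⟩
  · exact lim_mass_nonpos_of_lim_eq hpos hinj hcc' hM hx Sum.inr_ne_inl heq
  · simpa [Fintype.sum_sum_type, ccTerm] using lim_eq_sum_ccTerm hpos hcc' hM hx (Sum.inr j)
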